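/- Let m ≥ 3 be an odd integer and define G_m(θ) = Σ_{j=0}^{m−1} |sin(2jπ/m + 2θ)| for θ ∈ ℝ. Then G_m(θ) ≤ 1/sin(π/(2m)) for every θ ∈ [0, π], and G_m(π/(4m)) = 1/sin(π/(2m)); hence max_{θ∈[0,π]} G_m(θ) = 1/sin(π/(2m)). -/
import Mathlib

open Real

/-- `G_m(θ) = Σ_{j=0}^{m-1} |sin(2jπ/m + 2θ)|`. -/
noncomputable def G (m : ℕ) (θ : ℝ) : ℝ :=
  ∑ j ∈ Finset.range m, |Real.sin (2 * j * π / m + 2 * θ)|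

namespace Stmt8Aux

noncomputable def H (m : ℕ) (x : ℝ) : ℝ :=
  ∑ k ∈ Finset.range m, |Real.sin (k * π / m + x)|

lemma abs_sin_add_nat_mul_pi (n : ℕ) (x : ℝ) : |Real.sin (x + n * π)| = |Real.sin x| := by
  induction n with
  | zero => simp
  | succ k ih =>
      have h : x + ((k : ℝ) + 1) * π = (x + k * π) + π := by ring
      push_cast
      rw [h, Real.sin_add_pi, abs_neg]
      exact_mod_cast ih

lemma sum_sin (m : ℕ) (hm : 1 ≤ m) (x : ℝ) :
    ∑ k ∈ Finset.range m, Real.sin (k * π / m + x)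
      = Real.cos (x - π / (2 * m)) / Real.sin (π / (2 * m)) := by
  have hm0 : (m : ℝ) ≠ 0 := Nat.cast_ne_zero.mpr (by omega)
  have hm0' : (0 : ℝ) < m := by positivity
  have hs : 0 < Real.sin (π / (2 * m)) := by
    apply Real.sin_pos_of_pos_of_lt_pi
    · positivity
    · rw [div_lt_iff₀ (by positivity)]
      have hm1' : (1:ℝ) ≤ m := by exact_mod_cast hm
      nlinarith [Real.pi_pos]
  have key : ∀ k : ℕ,
      Real.cos (k * π / m + x - π / (2 * m)) - Real.cos ((k + 1 : ℕ) * π / m + x - π / (2 * m))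
        = 2 * Real.sin (π / (2 * m)) * Real.sin (k * π / m + x) := by
    intro k
    rw [Real.cos_sub_cos]
    push_cast
    have e1 : ((k * π / m + x - π / (2 * m)) + (((k : ℝ) + 1) * π / m + x - π / (2 * m))) / 2
        = k * π / m + x := by field_simp; ring
    have e2 : ((k * π / m + x - π / (2 * m)) - (((k : ℝ) + 1) * π / m + x - π / (2 * m))) / 2
        = -(π / (2 * m)) := by field_simp; ring
    rw [e1, e2, Real.sin_neg]
    ring
  have tele := Finset.sum_range_sub' (fun k : ℕ => Real.cos (k * π / m + x - π / (2 * m))) m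
  have hsum : ∑ k ∈ Finset.range m, 2 * Real.sin (π / (2 * m)) * Real.sin (k * π / m + x)
      = Real.cos ((0 : ℕ) * π / m + x - π / (2 * m))
        - Real.cos ((m : ℝ) * π / m + x - π / (2 * m)) := by
    rw [← tele]
    exact Finset.sum_congr rfl fun k _ => (key k).symm
  have h0 : ((0 : ℕ) : ℝ) * π / m + x - π / (2 * m) = x - π / (2 * m) := by push_cast; ring
  have hmterm : (m : ℝ) * π / m + x - π / (2 * m) = (x - π / (2 * m)) + π := by
    field_simp; ring
  rw [h0, hmterm, Real.cos_add_pi] at hsum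
  have h2 : 2 * Real.sin (π / (2 * m)) * (∑ k ∈ Finset.range m, Real.sin (k * π / m + x))
      = 2 * Real.cos (x - π / (2 * m)) := by
    rw [Finset.mul_sum]; rw [hsum]; ring
  rw [eq_div_iff hs.ne']
  linear_combination h2 / 2

lemma H_eq_on (m : ℕ) (hm : 1 ≤ m) {x : ℝ} (hx : x ∈ Set.Icc 0 (π / m)) :
    H m x = Real.cos (x - π / (2 * m)) / Real.sin (π / (2 * m)) := by
  have hm0' : (0 : ℝ) < m := by positivity
  rw [H, ← sum_sin m hm x]
  refine Finset.sum_congr rfl fun k hk => ?_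
  rw [Finset.mem_range] at hk
  refine abs_of_nonneg (Real.sin_nonneg_of_nonneg_of_le_pi ?_ ?_)
  · have : (0:ℝ) ≤ (k : ℝ) * π / m := by positivity
    linarith [hx.1]
  · have hk' : (k : ℝ) ≤ (m : ℝ) - 1 := by
      have : (k : ℝ) + 1 ≤ (m : ℝ) := by exact_mod_cast hk
      linarith
    have h1 : (k : ℝ) * π / m + x ≤ ((m : ℝ) - 1) * π / m + π / m := by
      have hp : (0:ℝ) < π := Real.pi_pos
      gcongr
      exact hx.2
    have h2 : ((m : ℝ) - 1) * π / m + π / m = π := by field_simp; ring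
    linarith

lemma H_periodic (m : ℕ) (hm : 1 ≤ m) : Function.Periodic (H m) (π / m) := by
  intro x
  have hm0 : (m : ℝ) ≠ 0 := Nat.cast_ne_zero.mpr (by omega)
  have step : ∀ k : ℕ, |Real.sin (k * π / m + (x + π / m))|
      = |Real.sin ((k + 1 : ℕ) * π / m + x)| := by
    intro k
    congr 1
    push_cast
    field_simp
    ring
  calc H m (x + π / m)
      = ∑ k ∈ Finset.range m, |Real.sin ((k + 1 : ℕ) * π / m + x)| :=
        Finset.sum_congr rfl fun k _ => step k
    _ = (∑ k ∈ Finset.range (m + 1), |Real.sin (k * π / m + x)|)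
          - |Real.sin ((0 : ℕ) * π / m + x)| := by
        rw [Finset.sum_range_succ']; ring
    _ = H m x := by
        rw [Finset.sum_range_succ]
        have h1 : ((m : ℝ)) * π / m + x = x + π := by field_simp; ring
        have h2 : (0 : ℝ) * π / m + x = x := by ring
        push_cast
        rw [h1, h2, Real.sin_add_pi, abs_neg, H]
        ring

lemma G_eq_H (m : ℕ) (hm : 3 ≤ m) (hodd : Odd m) (θ : ℝ) : G m θ = H m (2 * θ) := by
  obtain ⟨t, ht⟩ := hodd
  have hm0 : (m : ℝ) ≠ 0 := Nat.cast_ne_zero.mpr (by omega)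
  set F : ℕ → ℝ := fun n => |Real.sin (n * π / m + 2 * θ)| with hF
  have hFmod : ∀ n : ℕ, F n = F (n % m) := by
    intro n
    have hn : n = n % m + m * (n / m) := (Nat.mod_add_div n m).symm
    have : ((n : ℝ)) * π / m + 2 * θ
        = ((n % m : ℕ) : ℝ) * π / m + 2 * θ + (n / m : ℕ) * π := by
      nth_rewrite 1 [hn]
      push_cast
      field_simp
      ring
    simp only [hF, this]
    rw [abs_sin_add_nat_mul_pi]
  have h1 : G m θ = ∑ j ∈ Finset.range m, F (2 * j) := by
    refine Finset.sum_congr rfl fun j _ => ?_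
    simp only [hF]
    congr 2
    push_cast
    ring
  have h2 : ∑ j ∈ Finset.range m, F (2 * j) = ∑ j ∈ Finset.range m, F (2 * j % m) :=
    Finset.sum_congr rfl fun j _ => hFmod (2 * j)
  have h3 : ∑ j ∈ Finset.range m, F (2 * j % m) = ∑ k ∈ Finset.range m, F k := by
    refine Finset.sum_nbij' (fun j => 2 * j % m) (fun k => (t + 1) * k % m) ?_ ?_ ?_ ?_ ?_
    · intro a ha
      exact Finset.mem_range.mpr (Nat.mod_lt _ (by omega))
    · intro a ha
      exact Finset.mem_range.mpr (Nat.mod_lt _ (by omega))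
    · intro a ha
      rw [Finset.mem_range] at ha
      show (t + 1) * (2 * a % m) % m = a
      have e1 : (t + 1) * (2 * a % m) % m = (t + 1) * (2 * a) % m := by
        conv_lhs => rw [Nat.mul_mod, Nat.mod_mod_of_dvd _ dvd_rfl]
        rw [← Nat.mul_mod]
      have e2 : (t + 1) * (2 * a) = a + m * a := by rw [ht]; ring
      rw [e1, e2, Nat.add_mul_mod_self_left, Nat.mod_eq_of_lt ha]
    · intro a ha
      rw [Finset.mem_range] at ha
      show 2 * ((t + 1) * a % m) % m = a
      have e1 : 2 * ((t + 1) * a % m) % m = 2 * ((t + 1) * a) % m := by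
        conv_lhs => rw [Nat.mul_mod, Nat.mod_mod_of_dvd _ dvd_rfl]
        rw [← Nat.mul_mod]
      have e2 : 2 * ((t + 1) * a) = a + m * a := by rw [ht]; ring
      rw [e1, e2, Nat.add_mul_mod_self_left, Nat.mod_eq_of_lt ha]
    · intro a _
      rfl
  rw [h1, h2, h3]
  rfl

end Stmt8Aux

open Stmt8Aux in
theorem stmt8 (m : ℕ) (hm : 3 ≤ m) (hodd : Odd m) :
    (∀ θ ∈ Set.Icc (0 : ℝ) π, G m θ ≤ 1 / Real.sin (π / (2 * m))) ∧
    G m (π / (4 * m)) = 1 / Real.sin (π / (2 * m)) ∧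
    IsGreatest (G m '' Set.Icc (0 : ℝ) π) (1 / Real.sin (π / (2 * m))) := by
  have hm1 : 1 ≤ m := by omega
  have hm0' : (0 : ℝ) < m := by positivity
  have hpi : (0 : ℝ) < π := Real.pi_pos
  have hm1' : (1:ℝ) ≤ m := by exact_mod_cast hm1
  have hs : 0 < Real.sin (π / (2 * m)) := by
    apply Real.sin_pos_of_pos_of_lt_pi
    · positivity
    · rw [div_lt_iff₀ (by positivity)]
      have hm1' : (1:ℝ) ≤ m := by exact_mod_cast hm1
      nlinarith
  have hbound : ∀ θ : ℝ, G m θ ≤ 1 / Real.sin (π / (2 * m)) := by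
    intro θ
    rw [G_eq_H m hm hodd]
    obtain ⟨y, hy, hxy⟩ := (H_periodic m hm1).exists_mem_Ico₀ (by positivity) (2 * θ)
    rw [hxy, H_eq_on m hm1 ⟨hy.1, le_of_lt hy.2⟩]
    gcongr
    exact Real.cos_le_one _
  have heq : G m (π / (4 * m)) = 1 / Real.sin (π / (2 * m)) := by
    rw [G_eq_H m hm hodd]
    have h2 : 2 * (π / (4 * m)) = π / (2 * m) := by field_simp; ring
    rw [h2, H_eq_on m hm1 ⟨by positivity, by gcongr <;> linarith⟩]
    simp
  refine ⟨fun θ _ => hbound θ, heq, ⟨⟨π / (4 * m), ⟨by positivity, ?_⟩, heq⟩, ?_⟩⟩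
  · have : π / (4 * m) ≤ π / 1 := by gcongr <;> linarith
    simpa using this
  · rintro y ⟨θ, hθ, rfl⟩
    exact hbound θ
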